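/- Every homeomorphism f : L₊ → L₊ of the half-open long line with f of finite order in the group of homeomorphisms (fᵏ = id for some k ≥ 1) is the identity; equivalently, the homeomorphism group of L₊ is torsion-free. -/

import Mathlib

/-- The set of countable ordinals (ordinals less than the first uncountable ordinal `ω₁`). -/
def SOmega : Type 1 := Set.Iio (Cardinal.aleph 1).ord

noncomputable instance : LinearOrder SOmega :=
  inferInstanceAs (LinearOrder (Set.Iio (Cardinal.aleph 1).ord))

/-- The half-open long line `L₊ = [0,1) × S_Ω` with the lexicographic order
(ordinal coordinate first, then the real coordinate). -/
def LongLinePlus : Type 1 := SOmega ×ₗ (Set.Ico (0:ℝ) 1)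

noncomputable instance : LinearOrder LongLinePlus :=
  inferInstanceAs (LinearOrder (SOmega ×ₗ (Set.Ico (0:ℝ) 1)))

/-- `L₊` carries the order topology. -/
noncomputable instance : TopologicalSpace LongLinePlus := Preorder.topology LongLinePlus
instance : OrderTopology LongLinePlus := ⟨rfl⟩

/-!
`L₊` is a linear continuum: it is densely ordered, and it is conditionally complete because its
ordinal coordinate is well ordered (a bounded set whose top fibre is unbounded in `[0,1)` has the
successor ordinal paired with `0` as supremum). A continuous injection of a linear continuum into
itself is strictly monotone or strictly antitone, and an antitone bijection would send the least
point of `L₊` to a greatest one, which does not exist. Finally, a strictly increasing map moves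
every point it does not fix monotonically along its orbit, so it has no periodic points other
than fixed points.
-/

open Set Function

namespace Prod.Lex

variable {α β : Type*}

theorem mem_upperBounds_iff [PartialOrder α] [LE β] {s : Set (α ×ₗ β)} {c : α ×ₗ β} :
    c ∈ upperBounds s ↔ (ofLex c).1 ∈ upperBounds ((fun x => (ofLex x).1) '' s) ∧
      (ofLex c).2 ∈ upperBounds {t | toLex ((ofLex c).1, t) ∈ s} := by
  constructor
  · intro hc
    refine ⟨?_, fun t ht => ?_⟩
    · rintro _ ⟨x, hx, rfl⟩
      exact monotone_fst x c (hc hx)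
    · rcases le_iff.1 (hc ht) with h | ⟨-, h⟩
      · exact absurd h (lt_irrefl _)
      · exact h
  · rintro ⟨h1, h2⟩ x hx
    rcases (h1 ⟨x, hx, rfl⟩).lt_or_eq with h | h
    · exact le_iff.2 (Or.inl h)
    · exact le_iff.2 (Or.inr ⟨h, h2 (by simpa [← h] using hx)⟩)

theorem toLex_le_of_le_fst [PartialOrder α] [LE β] {a : α} {b : β} {c : α ×ₗ β}
    (h₁ : a ≤ (ofLex c).1) (h₂ : a = (ofLex c).1 → b ≤ (ofLex c).2) : toLex (a, b) ≤ c :=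
  h₁.lt_or_eq.elim (fun h => le_iff.2 (Or.inl h)) fun h => le_iff.2 (Or.inr ⟨h, h₂ h⟩)

theorem exists_isLUB [ConditionallyCompleteLinearOrder α] [SuccOrder α] [NoMaxOrder α]
    [ConditionallyCompleteLinearOrder β] [OrderBot β] {s : Set (α ×ₗ β)} (hne : s.Nonempty)
    (hbdd : BddAbove s) : ∃ c, IsLUB s c := by
  obtain ⟨a, hA⟩ : ∃ a, IsLUB ((fun x => (ofLex x).1) '' s) a :=
    ⟨_, isLUB_csSup (hne.image _) (monotone_fst_ofLex.map_bddAbove hbdd)⟩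
  by_cases hT : {t | toLex (a, t) ∈ s}.Nonempty
  · by_cases hTb : BddAbove {t | toLex (a, t) ∈ s}
    · refine ⟨toLex (a, sSup {t | toLex (a, t) ∈ s}),
        mem_upperBounds_iff.2 ⟨hA.1, fun t ht => le_csSup hTb ht⟩, fun c hc => ?_⟩
      obtain ⟨hc₁, hc₂⟩ := mem_upperBounds_iff.1 hc
      exact toLex_le_of_le_fst (hA.2 hc₁) fun h => csSup_le hT (h ▸ hc₂)
    · refine ⟨toLex (Order.succ a, ⊥),
        fun x hx => le_iff.2 (Or.inl ((hA.1 ⟨x, hx, rfl⟩).trans_lt (Order.lt_succ a))),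
        fun c hc => ?_⟩
      obtain ⟨hc₁, hc₂⟩ := mem_upperBounds_iff.1 hc
      have ha : a < (ofLex c).1 := (hA.2 hc₁).lt_of_ne fun h => hTb ⟨_, h ▸ hc₂⟩
      exact toLex_le_of_le_fst (Order.succ_le_of_lt ha) fun _ => bot_le
  · refine ⟨toLex (a, ⊥), mem_upperBounds_iff.2 ⟨hA.1, fun t ht => (hT ⟨t, ht⟩).elim⟩,
      fun c hc => toLex_le_of_le_fst (hA.2 (mem_upperBounds_iff.1 hc).1) fun _ => bot_le⟩

end Prod.Lex

open scoped Classical in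
noncomputable abbrev ConditionallyCompleteLinearOrderBot.ofExistsIsLUB (γ : Type*)
    [LinearOrder γ] [OrderBot γ]
    (h : ∀ s : Set γ, s.Nonempty → BddAbove s → ∃ c, IsLUB s c) :
    ConditionallyCompleteLinearOrderBot γ :=
  letI : SupSet γ := ⟨fun s => if hs : ∃ c, IsLUB s c then hs.choose else ⊥⟩
  have sSup_eq {s : Set γ} {c : γ} (hc : IsLUB s c) : sSup s = c := by
    change dite _ _ _ = c
    rw [dif_pos ⟨c, hc⟩]
    exact IsLUB.unique (Exists.choose_spec ⟨c, hc⟩) hc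
  { __ := ‹LinearOrder γ›
    __ := ‹OrderBot γ›
    __ := LinearOrder.toLattice
    __ := conditionallyCompleteLatticeOfLatticeOfsSup γ fun s hb hne => by
      obtain ⟨c, hc⟩ := h s hne hb
      rwa [sSup_eq hc]
    csSup_empty := sSup_eq isLUB_empty
    csSup_of_not_bddAbove := fun s hs => by
      rw [sSup_eq isLUB_empty]
      exact dif_neg fun ⟨_, hc⟩ => hs hc.bddAbove
    csInf_of_not_bddBelow := fun s hs => (hs (OrderBot.bddBelow s)).elim }

theorem StrictMono.isFixedPt_of_isPeriodicPt {α : Type*} [LinearOrder α] {f : α → α}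
    (hf : StrictMono f) {n : ℕ} (hn : 0 < n) {x : α} (hx : IsPeriodicPt f n x) :
    IsFixedPt f x := by
  refine (Commute.id_right.iterate_pos_eq_iff_map_eq hf.monotone strictMono_id hn).1 ?_
  rw [iterate_id]
  exact hx

theorem Homeomorph.strictMono_of_orderBot {α : Type*} [ConditionallyCompleteLinearOrder α]
    [TopologicalSpace α] [OrderTopology α] [DenselyOrdered α] [OrderBot α] [NoMaxOrder α]
    (f : α ≃ₜ α) : StrictMono f :=
  (f.continuous.strictMono_of_inj f.injective).resolve_right fun hf =>
    not_isMax (f ⊥) fun b _ => by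
      obtain ⟨y, rfl⟩ := f.surjective b
      exact hf.antitone bot_le

instance : Inhabited (Ico (0 : ℝ) 1) := ⟨⊥⟩

instance : WellFoundedLT SOmega := inferInstanceAs (WellFoundedLT (Iio (Cardinal.aleph 1).ord))

theorem Cardinal.isSuccLimit_ord_aleph_one : Order.IsSuccLimit (aleph 1).ord :=
  isSuccLimit_ord (aleph0_le_aleph 1)

instance : NoMaxOrder SOmega := Cardinal.isSuccLimit_ord_aleph_one.isSuccPrelimit.noMaxOrder_Iio

instance : Nonempty SOmega := ⟨⟨0, Cardinal.isSuccLimit_ord_aleph_one.pos⟩⟩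

noncomputable instance : OrderBot SOmega := WellFoundedLT.toOrderBot SOmega

noncomputable instance : ConditionallyCompleteLinearOrderBot SOmega :=
  WellFoundedLT.conditionallyCompleteLinearOrderBot SOmega

noncomputable instance : SuccOrder SOmega := .ofLinearWellFoundedLT SOmega

instance : NoMaxOrder LongLinePlus := inferInstanceAs (NoMaxOrder (SOmega ×ₗ Ico (0 : ℝ) 1))

instance : DenselyOrdered LongLinePlus :=
  inferInstanceAs (DenselyOrdered (SOmega ×ₗ Ico (0 : ℝ) 1))

noncomputable instance : OrderBot LongLinePlus :=
  inferInstanceAs (OrderBot (SOmega ×ₗ Ico (0 : ℝ) 1))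

noncomputable instance : ConditionallyCompleteLinearOrderBot LongLinePlus :=
  .ofExistsIsLUB LongLinePlus fun _ => Prod.Lex.exists_isLUB (α := SOmega) (β := Ico (0 : ℝ) 1)

/-- Every finite-order homeomorphism of `L₊` is the identity; i.e. the homeomorphism
group of `L₊` is torsion-free. -/
theorem longLinePlus_homeomorph_finite_order_eq_id (f : LongLinePlus ≃ₜ LongLinePlus)
    (hf : ∃ k : ℕ, 1 ≤ k ∧ ∀ x : LongLinePlus, (⇑f)^[k] x = x) :
    ∀ x : LongLinePlus, f x = x := by
  obtain ⟨k, hk, hfk⟩ := hf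
  exact fun x => f.strictMono_of_orderBot.isFixedPt_of_isPeriodicPt hk (hfk x)
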